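/- Let X be a chain and let α, β be orientation-preserving partial transformations of X. Then α and β are J-related in the monoid POP(X) (i.e. there exist λ, γ, δ, ξ ∈ POP(X) with α = λβγ and β = δαξ, composition written left-to-right with the left factor applied first) if and only if there exist injective orientation-preserving partial transformations θ and τ of X with Dom(θ) = Im(α), θ(Im(α)) ⊆ Im(β), Dom(τ) = Im(β), and τ(Im(β)) ⊆ Im(α). -/

import Mathlib

variable {X : Type*}

/-- The partial transformation `f` is order-preserving on the subset `A` of its domain. -/
def IsOrdOn [LinearOrder X] (f : X →. X) (A : Set X) : Prop :=
  ∀ ⦃x y u v : X⦄, x ∈ A → y ∈ A → x ≤ y → u ∈ f x → v ∈ f y → u ≤ v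

/-- `Y` is an ideal of the partial transformation `f`: a nonempty subset of the domain such
that `f` is order-preserving on `Y` and on `Dom f \ Y`, and every element of `Y` is below every
element of `Dom f \ Y` while its image is above. -/
def IsIdeal [LinearOrder X] (f : X →. X) (Y : Set X) : Prop :=
  Y.Nonempty ∧ Y ⊆ f.Dom ∧ IsOrdOn f Y ∧ IsOrdOn f (f.Dom \ Y) ∧
    ∀ ⦃a b u v : X⦄, a ∈ Y → b ∈ f.Dom \ Y → u ∈ f a → v ∈ f b → a ≤ b ∧ v ≤ u

/-- `f` is an orientation-preserving partial transformation: it is the empty transformation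
or it admits an ideal. -/
def IsOP [LinearOrder X] (f : X →. X) : Prop :=
  f.Dom = ∅ ∨ ∃ Y : Set X, IsIdeal f Y

/-!
A partial transformation is orientation-preserving exactly when it becomes monotone once an
initial segment `Y` of its domain is moved behind the rest of the domain. A rotation of a rotated
chain is again a rotation, so composites of orientation-preserving maps are orientation-preserving,
and so is any choice of preimages of one.

If `α = λβγ`, choosing for each point of `Im α` a `γ`-preimage in `Im (λβ) ⊆ Im β` gives `θ`.
Conversely, given `θ` and a choice of preimages `β⁻¹`, the factors `λ = αθβ⁻¹` and `γ = θ⁻¹`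
recover `α = λβγ` because `θ` is injective on `Im α`.
-/

section Rotation

variable {α : Type*}

/-- The relation `r` with the elements of `Y` moved after all the others. -/
def Rotated (r : α → α → Prop) (Y : Set α) (x y : α) : Prop :=
  (x ∈ Y ↔ y ∈ Y) ∧ r x y ∨ x ∉ Y ∧ y ∈ Y

def IsInitialIn (r : α → α → Prop) (D Y : Set α) : Prop :=
  ∀ ⦃a b⦄, a ∈ D → b ∈ D → a ∈ Y → b ∉ Y → r a b

theorem IsInitialIn.mono {r : α → α → Prop} {D D' Y : Set α} (h : IsInitialIn r D Y)
    (hD : D' ⊆ D) : IsInitialIn r D' Y :=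
  fun _ _ ha hb => h (hD ha) (hD hb)

theorem Rotated.map {β : Type*} {r : α → α → Prop} {s : β → β → Prop} {P : Set α} {Q : Set β}
    {x y : α} {x' y' : β} (hx : x ∈ P ↔ x' ∈ Q) (hy : y ∈ P ↔ y' ∈ Q) (hr : r x y → s x' y')
    (h : Rotated r P x y) : Rotated s Q x' y' := by
  unfold Rotated at *
  tauto

theorem rotated_total {r : α → α → Prop} [Std.Total r] (Y : Set α) (x y : α) :
    Rotated r Y x y ∨ Rotated r Y y x := by
  unfold Rotated
  have := Std.Total.total (r := r) x y
  tauto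

theorem exists_rotated_of_rotated_rotated [LinearOrder α] {D A P : Set α}
    (hA : IsInitialIn (· ≤ ·) D A) (hP : IsInitialIn (Rotated (· ≤ ·) A) D P) :
    ∃ Z, IsInitialIn (· ≤ ·) D Z ∧
      ∀ ⦃x y⦄, x ∈ D → y ∈ D → Rotated (· ≤ ·) Z x y → Rotated (Rotated (· ≤ ·) A) P x y := by
  unfold IsInitialIn Rotated at *
  by_cases hAP : ∃ z ∈ D, z ∈ A ∧ z ∈ P
  · obtain ⟨z, hz, hzA, hzP⟩ := hAP
    -- otherwise `z ∈ A` would have to precede some `y ∉ A` in the order rotated at `A`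
    have hcover : ∀ y ∈ D, y ∈ A ∨ y ∈ P := fun y hy => by grind
    exact ⟨A ∩ P, by grind, by grind⟩
  · exact ⟨A ∪ P, by grind, by grind⟩

end Rotation

namespace PFun

variable {α β γ : Type*}

def Injective (f : α →. β) : Prop :=
  ∀ ⦃x y u⦄, u ∈ f x → u ∈ f y → x = y

noncomputable def invOn (f : α →. β) (S : Set α) : β →. α := fun y =>
  ⟨∃ x ∈ S, y ∈ f x, fun h => h.choose⟩

theorem mem_comp_iff {f : α →. β} {g : β →. γ} {x : α} {z : γ} :
    z ∈ g.comp f x ↔ ∃ y ∈ f x, z ∈ g y :=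
  Part.mem_bind_iff

theorem mem_dom_of_mem {f : α →. β} {x : α} {y : β} (h : y ∈ f x) : x ∈ f.Dom :=
  (f.mem_dom x).2 ⟨y, h⟩

theorem ran_comp_subset (f : α →. β) (g : β →. γ) : (g.comp f).ran ⊆ g.ran := fun _ ⟨_, hz⟩ =>
  let ⟨y, _, hz⟩ := mem_comp_iff.1 hz
  ⟨y, hz⟩

variable {f : α →. β} {S : Set α}

theorem mem_of_mem_invOn {x : α} {y : β} (h : x ∈ f.invOn S y) : x ∈ S ∧ y ∈ f x := by
  obtain ⟨hy, rfl⟩ := Part.mem_mk_iff.1 h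
  exact hy.choose_spec

theorem exists_mem_invOn {x : α} {y : β} (hx : x ∈ S) (h : y ∈ f x) :
    ∃ x', x' ∈ f.invOn S y :=
  ⟨_, Part.mem_mk_iff.2 ⟨⟨x, hx, h⟩, rfl⟩⟩

theorem Injective.mem_invOn (hf : f.Injective) {x : α} {y : β} (hx : x ∈ S) (h : y ∈ f x) :
    x ∈ f.invOn S y :=
  let ⟨_, h'⟩ := exists_mem_invOn hx h
  hf (mem_of_mem_invOn h').2 h ▸ h'

theorem injective_invOn : (f.invOn S).Injective := fun _ _ _ hx hy =>
  Part.mem_unique (mem_of_mem_invOn hx).2 (mem_of_mem_invOn hy).2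

theorem ran_invOn_subset : (f.invOn S).ran ⊆ S := fun _ ⟨_, h⟩ => (mem_of_mem_invOn h).1

theorem dom_invOn_ran (g : γ →. α) : (f.invOn g.ran).Dom = (f.comp g).ran := by
  ext z
  constructor
  · rintro ⟨y, ⟨x, hy⟩, hz⟩
    exact ⟨x, mem_comp_iff.2 ⟨y, hy, hz⟩⟩
  · rintro ⟨x, hz⟩
    obtain ⟨y, hy, hz⟩ := mem_comp_iff.1 hz
    exact ⟨y, ⟨x, hy⟩, hz⟩

theorem comp_invOn_comp {k : γ →. β} (hk : k.ran ⊆ f.ran) :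
    f.comp ((f.invOn Set.univ).comp k) = k := by
  ext x z
  simp only [mem_comp_iff]
  constructor
  · rintro ⟨y, ⟨w, hw, hy⟩, hz⟩
    rwa [Part.mem_unique hz (mem_of_mem_invOn hy).2]
  · intro hz
    obtain ⟨a, ha⟩ := hk ⟨x, hz⟩
    obtain ⟨y, hy⟩ := exists_mem_invOn (Set.mem_univ a) ha
    exact ⟨y, ⟨z, hz, hy⟩, (mem_of_mem_invOn hy).2⟩

theorem Injective.invOn_comp {k : γ →. α} (hf : f.Injective) (hk : k.ran ⊆ f.Dom) :
    (f.invOn Set.univ).comp (f.comp k) = k := by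
  ext x z
  simp only [mem_comp_iff]
  constructor
  · rintro ⟨w, ⟨y, hy, hw⟩, hz⟩
    rwa [hf (mem_of_mem_invOn hz).2 hw]
  · intro hz
    obtain ⟨w, hw⟩ := (f.mem_dom z).1 (hk ⟨x, hz⟩)
    exact ⟨w, ⟨z, hz, hw⟩, hf.mem_invOn (Set.mem_univ z) hw⟩

end PFun

variable [LinearOrder X]

def IsOrdWrt (r : X → X → Prop) (f : X →. X) : Prop :=
  ∀ ⦃x y u v : X⦄, r x y → u ∈ f x → v ∈ f y → u ≤ v

theorem isOP_iff_exists_rotated (f : X →. X) :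
    IsOP f ↔ ∃ Y, IsInitialIn (· ≤ ·) f.Dom Y ∧ IsOrdWrt (Rotated (· ≤ ·) Y) f := by
  constructor
  · rintro (hD | ⟨Y, -, -, hY, hYc, hcross⟩)
    · refine ⟨∅, fun a _ ha => ?_, fun x _ _ _ _ hu => ?_⟩
      · simp [hD] at ha
      · simpa [hD] using PFun.mem_dom_of_mem hu
    refine ⟨Y, fun a b ha hb haY hbY => ?_, fun x y u v h hu hv => ?_⟩
    · obtain ⟨u, hu⟩ := (f.mem_dom a).1 ha
      obtain ⟨v, hv⟩ := (f.mem_dom b).1 hb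
      exact (hcross haY ⟨hb, hbY⟩ hu hv).1
    rcases h with ⟨hiff, hxy⟩ | ⟨hx, hy⟩
    · by_cases hxY : x ∈ Y
      · exact hY hxY (hiff.1 hxY) hxy hu hv
      · exact hYc ⟨PFun.mem_dom_of_mem hu, hxY⟩ ⟨PFun.mem_dom_of_mem hv, mt hiff.2 hxY⟩ hxy hu hv
    · exact (hcross hy ⟨PFun.mem_dom_of_mem hu, hx⟩ hv hu).2
  · rintro ⟨Y, hinit, hmono⟩
    by_cases hD : f.Dom = ∅
    · exact Or.inl hD
    right
    by_cases hY : (f.Dom ∩ Y).Nonempty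
    · refine ⟨f.Dom ∩ Y, hY, Set.inter_subset_left, ?_, ?_, ?_⟩
      · exact fun x y u v hx hy hxy => hmono (Or.inl ⟨iff_of_true hx.2 hy.2, hxy⟩)
      · intro x y u v hx hy hxy
        exact hmono (Or.inl ⟨iff_of_false (fun h => hx.2 ⟨hx.1, h⟩) (fun h => hy.2 ⟨hy.1, h⟩), hxy⟩)
      · intro a b u v ha hb hu hv
        have hbY : b ∉ Y := fun h => hb.2 ⟨hb.1, h⟩
        exact ⟨hinit ha.1 hb.1 ha.2 hbY, hmono (Or.inr ⟨hbY, ha.2⟩) hv hu⟩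
    · have hnot : ∀ x ∈ f.Dom, x ∉ Y := fun x hx hxY => hY ⟨x, hx, hxY⟩
      refine ⟨f.Dom, Set.nonempty_iff_ne_empty.2 hD, subset_rfl, ?_, ?_, ?_⟩
      · exact fun x y u v hx hy hxy => hmono (Or.inl ⟨iff_of_false (hnot x hx) (hnot y hy), hxy⟩)
      · exact fun x _ _ _ hx => absurd hx.1 hx.2
      · exact fun _ b _ _ _ hb => absurd hb.1 hb.2

theorem IsOP.of_subset_inverse {f s : X →. X} (hf : IsOP f)
    (hs : ∀ ⦃y x : X⦄, x ∈ s y → y ∈ f x) : IsOP s := by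
  rw [isOP_iff_exists_rotated] at hf ⊢
  obtain ⟨Y, hinit, hmono⟩ := hf
  set Q := {y | ∃ x ∈ s y, x ∉ Y}
  have memQ : ∀ ⦃y x⦄, x ∈ s y → (y ∈ Q ↔ x ∉ Y) := fun y x hx =>
    ⟨fun ⟨x', hx', hx'Y⟩ => Part.mem_unique hx' hx ▸ hx'Y, fun hxY => ⟨x, hx, hxY⟩⟩
  refine ⟨Q, fun y₁ y₂ _ hy₂ hy₁Q hy₂Q => ?_, fun y₁ y₂ x₁ x₂ h hx₁ hx₂ => ?_⟩
  · obtain ⟨x₁, hx₁, hx₁Y⟩ := hy₁Q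
    obtain ⟨x₂, hx₂⟩ := (s.mem_dom y₂).1 hy₂
    exact hmono (Or.inr ⟨hx₁Y, not_not.1 (mt (memQ hx₂).2 hy₂Q)⟩) (hs hx₁) (hs hx₂)
  rcases h with ⟨hiff, hy⟩ | ⟨hy₁, hy₂⟩
  · by_contra! hlt
    have hY : x₂ ∈ Y ↔ x₁ ∈ Y := by
      rw [← not_iff_not, ← memQ hx₁, ← memQ hx₂, hiff]
    have hy₁₂ : y₁ = y₂ := le_antisymm hy (hmono (Or.inl ⟨hY, hlt.le⟩) (hs hx₂) (hs hx₁))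
    subst hy₁₂
    exact hlt.ne (Part.mem_unique hx₂ hx₁)
  · exact hinit (PFun.mem_dom_of_mem (hs hx₁)) (PFun.mem_dom_of_mem (hs hx₂))
      (not_not.1 (mt (memQ hx₁).2 hy₁)) ((memQ hx₂).1 hy₂)

theorem IsOP.invOn {f : X →. X} (hf : IsOP f) (S : Set X) : IsOP (f.invOn S) :=
  hf.of_subset_inverse fun _ _ h => (PFun.mem_of_mem_invOn h).2

theorem IsOP.comp {f g : X →. X} (hf : IsOP f) (hg : IsOP g) : IsOP (g.comp f) := by
  rw [isOP_iff_exists_rotated] at hf hg ⊢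
  obtain ⟨A, hA, hfA⟩ := hf
  obtain ⟨B, hB, hgB⟩ := hg
  set P := {x | ∃ y ∈ f x, y ∈ B}
  have memP : ∀ ⦃x y⦄, y ∈ f x → (x ∈ P ↔ y ∈ B) := fun x y hy =>
    ⟨fun ⟨y', hy', hy'B⟩ => Part.mem_unique hy' hy ▸ hy'B, fun hyB => ⟨y, hy, hyB⟩⟩
  have mem_dom : ∀ ⦃x⦄, x ∈ (g.comp f).Dom → ∃ y ∈ f x, y ∈ g.Dom := fun x hx => by
    obtain ⟨z, hz⟩ := ((g.comp f).mem_dom x).1 hx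
    obtain ⟨y, hy, hz⟩ := PFun.mem_comp_iff.1 hz
    exact ⟨y, hy, PFun.mem_dom_of_mem hz⟩
  have hP : IsInitialIn (Rotated (· ≤ ·) A) (g.comp f).Dom P := by
    intro x₁ x₂ hx₁ hx₂ hx₁P hx₂P
    obtain ⟨y₁, hy₁, hy₁g⟩ := mem_dom hx₁
    obtain ⟨y₂, hy₂, hy₂g⟩ := mem_dom hx₂
    have hy₁B := (memP hy₁).1 hx₁P
    have hy₂B : y₂ ∉ B := mt (memP hy₂).2 hx₂P
    refine (rotated_total A x₁ x₂).resolve_right fun h => hy₂B ?_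
    rwa [le_antisymm (hfA h hy₂ hy₁) (hB hy₁g hy₂g hy₁B hy₂B)]
  have hmono : IsOrdWrt (Rotated (Rotated (· ≤ ·) A) P) (g.comp f) := by
    intro x₁ x₂ z₁ z₂ h hz₁ hz₂
    obtain ⟨y₁, hy₁, hz₁⟩ := PFun.mem_comp_iff.1 hz₁
    obtain ⟨y₂, hy₂, hz₂⟩ := PFun.mem_comp_iff.1 hz₂
    exact hgB (h.map (memP hy₁) (memP hy₂) fun hr => hfA hr hy₁ hy₂) hz₁ hz₂
  have hA' : IsInitialIn (· ≤ ·) (g.comp f).Dom A :=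
    hA.mono fun x hx => let ⟨_, hy, _⟩ := mem_dom hx; PFun.mem_dom_of_mem hy
  obtain ⟨Z, hZ, hZrot⟩ := exists_rotated_of_rotated_rotated hA' hP
  exact ⟨Z, hZ, fun x₁ x₂ z₁ z₂ h hz₁ hz₂ =>
    hmono (hZrot (PFun.mem_dom_of_mem hz₁) (PFun.mem_dom_of_mem hz₂) h) hz₁ hz₂⟩

theorem exists_injective_of_eq_comp {α β g l : X →. X} (hg : IsOP g)
    (h : α = g.comp (β.comp l)) :
    ∃ θ : X →. X, IsOP θ ∧ θ.Injective ∧ θ.Dom = α.ran ∧ θ.ran ⊆ β.ran := by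
  subst h
  exact ⟨g.invOn (β.comp l).ran, hg.invOn _, PFun.injective_invOn, PFun.dom_invOn_ran _,
    PFun.ran_invOn_subset.trans (PFun.ran_comp_subset l β)⟩

theorem exists_eq_comp_of_injective {α β θ : X →. X} (hα : IsOP α) (hβ : IsOP β)
    (hθ : IsOP θ) (hθinj : θ.Injective) (hdom : θ.Dom = α.ran) (hran : θ.ran ⊆ β.ran) :
    ∃ l g : X →. X, IsOP l ∧ IsOP g ∧ α = g.comp (β.comp l) := by
  refine ⟨(β.invOn Set.univ).comp (θ.comp α), θ.invOn Set.univ,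
    (hα.comp hθ).comp (hβ.invOn _), hθ.invOn _, ?_⟩
  rw [PFun.comp_invOn_comp ((PFun.ran_comp_subset α θ).trans hran),
    hθinj.invOn_comp hdom.symm.subset]

/-- Green's relation `J` in `POP(X)`: `α J β` (i.e. `α = λβγ` and `β = δαξ` for some
`λ, γ, δ, ξ ∈ POP(X)`, left factor applied first) iff there exist injective
orientation-preserving partial transformations `θ` and `τ` with `Dom θ = Im α`,
`θ(Im α) ⊆ Im β`, `Dom τ = Im β` and `τ(Im β) ⊆ Im α`. -/
theorem stmt18 (X : Type*) [LinearOrder X] (α β : X →. X)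
    (hα : IsOP α) (hβ : IsOP β) :
    ((∃ l g : X →. X, IsOP l ∧ IsOP g ∧ α = g.comp (β.comp l)) ∧
     (∃ d e : X →. X, IsOP d ∧ IsOP e ∧ β = e.comp (α.comp d))) ↔
    ((∃ θ : X →. X, IsOP θ ∧ (∀ ⦃x y u : X⦄, u ∈ θ x → u ∈ θ y → x = y) ∧
        θ.Dom = α.ran ∧ θ.ran ⊆ β.ran) ∧
     (∃ τ : X →. X, IsOP τ ∧ (∀ ⦃x y u : X⦄, u ∈ τ x → u ∈ τ y → x = y) ∧
        τ.Dom = β.ran ∧ τ.ran ⊆ α.ran)) := by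
  constructor
  · rintro ⟨⟨l, g, -, hg, hαβ⟩, ⟨d, e, -, he, hβα⟩⟩
    exact ⟨exists_injective_of_eq_comp hg hαβ, exists_injective_of_eq_comp he hβα⟩
  · rintro ⟨⟨θ, hθ, hθinj, hθdom, hθran⟩, ⟨τ, hτ, hτinj, hτdom, hτran⟩⟩
    exact ⟨exists_eq_comp_of_injective hα hβ hθ hθinj hθdom hθran,
      exists_eq_comp_of_injective hβ hα hτ hτinj hτdom hτran⟩
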